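/- Suppose m,n > 1 and fix a swap sequence of length at most K transforming the initial placement of the constructed token swapping instance into its target placement. Let S be a set of tokens that are all slot tokens or all non-slot tokens, and let g be a gadget (the ordering gadget or one of the slot gadgets). Suppose either (1) at some time during the sequence all tokens of S are in g, but each token of S was outside g at some earlier time and at some later time, or (2) at two times τ_1 < τ_2 all tokens of S are in g, but each token of S is at the root at some time between τ_1 and τ_2. Then the tokens of S make at least |S|²/2 contrary moves during the sequence, and consequently |S| ≤ k^{1/2+1/25}. -/

import Mathlib

namespace UnweightedTS

/-- Vertices of the constructed tree: the root, ordering-gadget vertices `ord d`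
(distance `d+1` from the root), slot-gadget path vertices `slot i d` (distance `d+1`
from the root in slot gadget `i`), and nooks.  (Coordinates range over all of `ℕ`;
the graph below only has edges between the vertices of the construction, so the
remaining vertices are isolated and carry no tokens.) -/
inductive Vtx (m : ℕ) where
  | root : Vtx m
  | ord : ℕ → Vtx m
  | slot : Fin m → ℕ → Vtx m
  | nook : Fin m → Vtx m
deriving DecidableEq

/-- Adjacency generator for the tree: `len i` = length of the path of slot gadget `i`,
`lenOrd` = length of the ordering path, `nd` = distance from the root of the path
vertex to which the nook of each slot gadget is attached. -/
def rel {m : ℕ} (len : Fin m → ℕ) (lenOrd nd : ℕ) : Vtx m → Vtx m → Prop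
  | .root, .ord d => d = 0 ∧ 0 < lenOrd
  | .ord d, .ord d' => d' = d + 1 ∧ d' < lenOrd
  | .root, .slot i d => d = 0 ∧ 0 < len i
  | .slot i d, .slot i' d' => i = i' ∧ d' = d + 1 ∧ d' < len i
  | .slot i d, .nook i' => i = i' ∧ d + 1 = nd ∧ d < len i
  | _, _ => False

/-- The constructed tree, as a simple graph. -/
def Tree {m : ℕ} (len : Fin m → ℕ) (lenOrd nd : ℕ) : SimpleGraph (Vtx m) :=
  SimpleGraph.fromRel (rel len lenOrd nd)

/-- Swap the two values `e.1`, `e.2`. -/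
def swapV {V : Type*} [DecidableEq V] (e : V × V) (v : V) : V :=
  if v = e.1 then e.2 else if v = e.2 then e.1 else v

/-- Apply a sequence of swaps to a token placement (token ↦ vertex). -/
def applySwaps {T V : Type*} [DecidableEq V] (σ : List (V × V)) (f : T → V) : T → V :=
  σ.foldl (fun g e => fun t => swapV e (g t)) f

/-- Apply a sequence of star swaps (each given by a leaf) to a placement on the star
with center `none` and leaves `some l`. -/
def starApply {L : Type*} [DecidableEq L] (σ : List L) (f : Option L → Option L) :
    Option L → Option L :=
  σ.foldl (fun g l => fun t => swapV ((none : Option L), some l) (g t)) f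

/-- The Star STS instance is a YES instance. -/
def StarSTSYes {L : Type*} [DecidableEq L] (π : Equiv.Perm (Option L)) (σ : List L) : Prop :=
  ∃ σ' : List L, σ'.Sublist σ ∧ starApply σ' id = ⇑π

/-- `k = (mn)^25`, the length of a big segment. -/
def kk (m n : ℕ) : ℕ := (m * n) ^ 25

/-- `k' = k / n^8`, the length of a padding segment. -/
def kk' (m n : ℕ) : ℕ := kk m n / n ^ 8

variable {m n : ℕ}

/-- `nᵢ`: the number of occurrences of slot `i` in the swap sequence. -/
def cnt (s : Fin n → Fin m) (i : Fin m) : ℕ :=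
  (Finset.univ.filter fun j : Fin n => s j = i).card

/-- Length of the ordering path: `nk + nmk'`. -/
def lenOrd (m n : ℕ) : ℕ := n * kk m n + n * m * kk' m n

/-- Length of the path of slot gadget `i`: `nᵢ k + n k'`. -/
def lenSlot (s : Fin n → Fin m) (i : Fin m) : ℕ := cnt s i * kk m n + n * kk' m n

/-- The non-item tokens: big segments `xⱼ`, `yⱼ` of `k` tokens each, and padding
segments `p_{i,j}`, `q_{i,j}` of `k'` tokens each (in this order of the sum). -/
abbrev NonItem (m n : ℕ) :=
  (Fin n × Fin (kk m n)) ⊕ (Fin n × Fin (kk m n)) ⊕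
    (Fin m × Fin n × Fin (kk' m n)) ⊕ (Fin m × Fin n × Fin (kk' m n))

/-- All tokens: item tokens (`Option (Fin m)`, `none` = item 0) and the non-item
tokens. -/
abbrev Tok (m n : ℕ) := Option (Fin m) ⊕ NonItem m n

/-- The constructed tree: ordering path of length `nk + nmk'`, slot path `i` of
length `nᵢk + nk'`, nooks attached at distance `k` from the root. -/
def TheGraph (s : Fin n → Fin m) : SimpleGraph (Vtx m) :=
  Tree (lenSlot s) (lenOrd m n) (kk m n)

/-- The distance from the root, in slot gadget `i`, at which the block of segment
`q_{i,j}` (preceded by `yⱼ` when `s j = i`) starts in the initial configuration. -/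
def offQ (s : Fin n → Fin m) (i : Fin m) (j : Fin n) : ℕ :=
  ∑ j' ∈ Finset.univ.filter (fun j' : Fin n => j'.val < j.val),
    (kk' m n + if s j' = i then kk m n else 0)

/-- The slot occurring next after position `j` in the swap sequence, if any. -/
def nxt (s : Fin n → Fin m) (j : Fin n) : Option (Fin m) :=
  if h : j.val + 1 < n then some (s ⟨j.val + 1, h⟩) else none

/-- The rank (`0`-based position) of the padding segment `q_{i,j}` among the `m`
padding segments following `yⱼ` in the target configuration of the ordering gadget:
`q_{s_{j+1},j}` first, `q_{s_j,j}` last, and the others in increasing order of `i`. -/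
def rho (s : Fin n → Fin m) (i : Fin m) (j : Fin n) : ℕ :=
  if some i = nxt s j then 0
  else if i = s j then m - 1
  else (if (nxt s j).isSome then 1 else 0) +
    (Finset.univ.filter fun i' : Fin m =>
      i'.val < i.val ∧ i' ≠ s j ∧ some i' ≠ nxt s j).card

/-- The distance from the root, in slot gadget `i`, at which the block of segment
`p_{i,j}` (followed by `xⱼ` when `s j = i`) starts in the target configuration. -/
def tOffP (s : Fin n → Fin m) (i : Fin m) (j : Fin n) : ℕ :=
  ∑ j' ∈ Finset.univ.filter (fun j' : Fin n => j.val < j'.val),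
    (kk' m n + if s j' = i then kk m n else 0)

/-- The initial placement of the tokens.  Item `0` is at the root and item `i` at the
nook of slot gadget `i`.  The ordering gadget contains, from the root outward, the
blocks `x₁, p_{·,1}, x₂, p_{·,2}, …, xₙ, p_{·,n}` (the `m` padding blocks after `xⱼ`
ordered by `rho`); slot gadget `i` contains, from the root outward, the blocks
`q_{i,1},…,q_{i,n}` with `yⱼ` inserted immediately on the root side of `q_{i,j}`
whenever `s j = i`.  Within a segment the coordinate `a` increases away from the root
in slot gadgets and away from the root in the ordering gadget. -/
def initTok (s : Fin n → Fin m) : Tok m n → Vtx m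
  | Sum.inl none => .root
  | Sum.inl (some i) => .nook i
  | Sum.inr (Sum.inl (j, a)) => .ord (j.val * (kk m n + m * kk' m n) + a.val)
  | Sum.inr (Sum.inr (Sum.inl (j, a))) => .slot (s j) (offQ s (s j) j + a.val)
  | Sum.inr (Sum.inr (Sum.inr (Sum.inl (i, j, a)))) =>
      .ord (j.val * (kk m n + m * kk' m n) + kk m n + rho s i j * kk' m n + a.val)
  | Sum.inr (Sum.inr (Sum.inr (Sum.inr (i, j, a)))) =>
      .slot i (offQ s i j + (if s j = i then kk m n else 0) + a.val)

/-- The target placement of the tokens.  Item `o` goes to the position of item `π o`;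
the ordering gadget contains, from its far end toward the root, the blocks
`y₁, q_{·,1}, y₂, q_{·,2}, …, yₙ, q_{·,n}` (the `m` padding blocks after `yⱼ` ordered
by `rho`); slot gadget `i` contains, from the root outward, the blocks
`p_{i,n},…,p_{i,1}` with `xⱼ` inserted immediately after (away from the root)
`p_{i,j}` whenever `s j = i`.  The left-to-right order of the tokens within each
segment is the same as in the initial configuration. -/
def tgtTok (s : Fin n → Fin m) (π : Equiv.Perm (Option (Fin m))) : Tok m n → Vtx m
  | Sum.inl o => (match π o with | none => .root | some i => .nook i)
  | Sum.inr (Sum.inl (j, a)) =>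
      .slot (s j) (tOffP s (s j) j + kk' m n + (kk m n - 1 - a.val))
  | Sum.inr (Sum.inr (Sum.inl (j, a))) =>
      .ord (lenOrd m n - 1 - (j.val * (kk m n + m * kk' m n) + a.val))
  | Sum.inr (Sum.inr (Sum.inr (Sum.inl (i, j, a)))) =>
      .slot i (tOffP s i j + (kk' m n - 1 - a.val))
  | Sum.inr (Sum.inr (Sum.inr (Sum.inr (i, j, a)))) =>
      .ord (lenOrd m n - 1 -
        (j.val * (kk m n + m * kk' m n) + kk m n + rho s i j * kk' m n + a.val))

/-- `d_t`: the tree distance between token `t`'s initial and target vertices. -/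
noncomputable def dd (s : Fin n → Fin m) (π : Equiv.Perm (Option (Fin m)))
    (t : Tok m n) : ℕ :=
  (TheGraph s).dist (initTok s t) (tgtTok s π t)

end UnweightedTS

namespace UnweightedTS

variable {m n : ℕ}

/-- The placement after the first `τ` swaps of `σ` (time `τ`). -/
def placeAt (σ : List (Vtx m × Vtx m)) (f : Tok m n → Vtx m) (τ : ℕ) : Tok m n → Vtx m :=
  applySwaps (σ.take τ) f

/-- `isLeftMove u v` holds when a token moving across an edge from `u` to `v` makes a
*left* move: towards the root within a slot gadget (including out of a nook), or away
from the root within the ordering gadget. -/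
def isLeftMove : Vtx m → Vtx m → Bool
  | .root, .ord _ => true
  | .ord _, .root => false
  | .ord d, .ord d' => decide (d < d')
  | .root, .slot _ _ => false
  | .slot _ _, .root => true
  | .slot _ d, .slot _ d' => decide (d' < d)
  | .nook _, .slot _ _ => true
  | .slot _ _, .nook _ => false
  | _, _ => false

/-- A token of a `y` or `q` segment (initial vertex in a slot gadget). -/
def isSlotTok : Tok m n → Prop
  | Sum.inr (Sum.inr (Sum.inl _)) => True
  | Sum.inr (Sum.inr (Sum.inr (Sum.inr _))) => True
  | _ => False

/-- A token of an `x` or `p` segment (initial vertex in the ordering gadget). -/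
def isNonSlotTok : Tok m n → Prop
  | Sum.inr (Sum.inl _) => True
  | Sum.inr (Sum.inr (Sum.inr (Sum.inl _))) => True
  | _ => False

/-- `isContrary t u v` holds when a move of token `t` from `u` to `v` is a *contrary*
move: a right move of a slot token, a right move of an item token, or a left move of a
non-slot token. -/
def isContrary (t : Tok m n) (u v : Vtx m) : Bool :=
  match t with
  | Sum.inr (Sum.inl _) => isLeftMove u v
  | Sum.inr (Sum.inr (Sum.inr (Sum.inl _))) => isLeftMove u v
  | _ => !isLeftMove u v

/-- `c_t`: the number of contrary moves made by token `t` during the swap sequence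
(starting from the placement `f`). -/
def cCount (t : Tok m n) : List (Vtx m × Vtx m) → (Tok m n → Vtx m) → ℕ
  | [], _ => 0
  | e :: rest, f =>
      ((if f t = e.1 ∧ isContrary t e.1 e.2 = true then 1 else 0) +
        (if f t = e.2 ∧ isContrary t e.2 e.1 = true then 1 else 0)) +
        cCount t rest (fun t' => swapV e (f t'))

/-- Membership of a vertex in a gadget (`none` = the ordering gadget, `some i` = slot
gadget `i`, which includes its nook).  The root belongs to no gadget. -/
def memGadget : Vtx m → Option (Fin m) → Prop
  | .ord _, none => True
  | .slot i _, some i' => i = i'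
  | .nook i, some i' => i = i'
  | _, _ => False

/-- The pair of tokens `t₁`, `t₂` is exchanged by the swap at step `idx` of `σ`. -/
def swapsPairAt (σ : List (Vtx m × Vtx m)) (f : Tok m n → Vtx m) (idx : ℕ)
    (t₁ t₂ : Tok m n) : Prop :=
  ∃ h : idx < σ.length,
    (placeAt σ f idx t₁ = (σ.get ⟨idx, h⟩).1 ∧ placeAt σ f idx t₂ = (σ.get ⟨idx, h⟩).2) ∨
    (placeAt σ f idx t₁ = (σ.get ⟨idx, h⟩).2 ∧ placeAt σ f idx t₂ = (σ.get ⟨idx, h⟩).1)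

/-- No pair of tokens swaps with each other more than once during `σ`. -/
def MinimalSeq (σ : List (Vtx m × Vtx m)) (f : Tok m n → Vtx m) : Prop :=
  ∀ (t₁ t₂ : Tok m n) (i₁ i₂ : ℕ), i₁ < i₂ →
    swapsPairAt σ f i₁ t₁ t₂ → ¬ swapsPairAt σ f i₂ t₁ t₂

/-- The gadget containing a vertex, if any. -/
def gadgetOfV : Vtx m → Option (Fin m)
  | .slot i _ => some i
  | .nook i => some i
  | _ => none

/-- The free item token at time `τ`: the item token that was most recently at the
root (initially item `0`, i.e. `none`). -/
noncomputable def freeAt (σ : List (Vtx m × Vtx m)) (f : Tok m n → Vtx m) :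
    ℕ → Option (Fin m)
  | 0 => none
  | τ + 1 =>
      if h : ∃ o : Option (Fin m), placeAt σ f (τ + 1) (Sum.inl o) = Vtx.root then
        h.choose
      else freeAt σ f τ

/-- The exchange sequence `χ` built from the first `τ` steps: each time an item token
that was just in slot gadget `i` becomes the new free item token, `i` is appended. -/
noncomputable def chiList (σ : List (Vtx m × Vtx m)) (f : Tok m n → Vtx m) :
    ℕ → List (Fin m)
  | 0 => []
  | τ + 1 =>
      chiList σ f τ ++
        (if freeAt σ f (τ + 1) ≠ freeAt σ f τ then
          (match gadgetOfV (placeAt σ f τ (Sum.inl (freeAt σ f (τ + 1)))) with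
            | some i => [i]
            | none => [])
        else [])

end UnweightedTS

/-!
Measure every vertex by its signed distance `height` from the root (positive in the slot
gadgets, negative in the ordering gadget) and orient each token so that its contrary moves are
exactly the moves that increase `orient t * height`.

Globally, every move changes `orient t * height` by `+1` if it is contrary and by `-1`
otherwise, and a non-item token has to lower it by at least `d_t` in total, so it makes at least
`2 c_t + d_t` moves. A swap moves at most two tokens, hence the length bound `K` leaves
`2 Σ c_t ≤ |A| + 2n ≤ (mn)^27`.

Locally, the potential that equals `orient t * height` inside `g` and `0` outside increases only
through contrary moves, one unit at a time, because `g` is entered and left through the root.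
So a token that enters and leaves `g`, or passes the root, is at some moment inside `g` at
distance at most `c_t` from the root, and this moment can be chosen common to all of `S`.
There the tokens of `S` sit on distinct vertices of `g`, whose distances from the root are
distinct except that the nook is as far as one path vertex. This gives `Σ c_t ≥ |S|²/2`, the
nook being harmless because the global bound keeps `|S|` at most `2k + 2`.
-/

namespace UnweightedTS

section Swaps

variable {T V : Type*} [DecidableEq V]

lemma swapV_eq_swap (e : V × V) : swapV e = Equiv.swap e.1 e.2 := by
  funext v
  rw [Equiv.swap_apply_def]
  rfl

lemma applySwaps_cons (e : V × V) (l : List (V × V)) (f : T → V) :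
    applySwaps (e :: l) f = applySwaps l (fun t => swapV e (f t)) := rfl

lemma applySwaps_append (l₁ l₂ : List (V × V)) (f : T → V) :
    applySwaps (l₁ ++ l₂) f = applySwaps l₂ (applySwaps l₁ f) := by
  simp [applySwaps, List.foldl_append]

lemma applySwaps_injective (l : List (V × V)) {f : T → V} (hf : Function.Injective f) :
    Function.Injective (applySwaps l f) := by
  induction l generalizing f with
  | nil => exact hf
  | cons e l ih =>
    exact ih (f := fun t => swapV e (f t))
      (by rw [swapV_eq_swap]; exact (Equiv.swap e.1 e.2).injective.comp hf)

lemma reachable_applySwaps {G : SimpleGraph V} {l : List (V × V)}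
    (hl : ∀ e ∈ l, G.Adj e.1 e.2) (f : T → V) (t : T) :
    G.Reachable (f t) (applySwaps l f t) := by
  induction l generalizing f with
  | nil => rfl
  | cons e l ih =>
    have he := hl e List.mem_cons_self
    refine .trans ?_ (ih (fun e' h' => hl e' (List.mem_cons_of_mem _ h')) _)
    change G.Reachable (f t) (swapV e (f t))
    rw [swapV_eq_swap, Equiv.swap_apply_def]
    split_ifs with h₁ h₂
    · exact h₁ ▸ he.reachable
    · exact h₂ ▸ he.symm.reachable
    · rfl

/-- The sum of `w u v` over the moves `u → v` of token `t` while `l` is applied to `f`. -/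
def moveSum (t : T) (w : V → V → ℤ) : List (V × V) → (T → V) → ℤ
  | [], _ => 0
  | e :: l, f =>
      ((if f t = e.1 then w e.1 e.2 else 0) + (if f t = e.2 then w e.2 e.1 else 0)) +
        moveSum t w l (fun t' => swapV e (f t'))

lemma moveSum_add_mul (t : T) (w₁ w₂ : V → V → ℤ) (a : ℤ) (l : List (V × V))
    (f : T → V) :
    moveSum t (fun u v => w₁ u v + a * w₂ u v) l f =
      moveSum t w₁ l f + a * moveSum t w₂ l f := by
  induction l generalizing f with
  | nil => simp [moveSum]
  | cons e l ih =>
    simp only [moveSum, ih]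
    split_ifs <;> ring

lemma sub_le_moveSum {G : SimpleGraph V} {l : List (V × V)} (hl : ∀ e ∈ l, G.Adj e.1 e.2)
    (ψ : V → ℤ) {w : V → V → ℤ} (hψ : ∀ u v, G.Adj u v → ψ v - ψ u ≤ w u v)
    (f : T → V) (t : T) :
    ψ (applySwaps l f t) - ψ (f t) ≤ moveSum t w l f := by
  induction l generalizing f with
  | nil => simp [moveSum, applySwaps]
  | cons e l ih =>
    have he := hl e List.mem_cons_self
    have hrest := ih (fun e' h' => hl e' (List.mem_cons_of_mem _ h')) (fun t' => swapV e (f t'))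
    rw [applySwaps_cons, moveSum]
    simp only [swapV] at hrest ⊢
    by_cases h₁ : f t = e.1
    · simp only [h₁, if_true, he.ne, if_false] at hrest ⊢
      linarith [hψ _ _ he]
    · by_cases h₂ : f t = e.2
      · simp only [h₂, if_true, he.ne.symm, if_false] at hrest ⊢
        linarith [hψ _ _ he.symm]
      · simp only [h₁, h₂, if_false] at hrest ⊢
        linarith

lemma sum_moveSum_one_le (A : Finset T) (l : List (V × V)) {f : T → V}
    (hf : Function.Injective f) :
    ∑ t ∈ A, moveSum t (fun _ _ => 1) l f ≤ 2 * l.length := by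
  induction l generalizing f with
  | nil => simp [moveSum]
  | cons e l ih =>
    have hat_most_one : ∀ x : V, ∑ t ∈ A, (if f t = x then (1 : ℤ) else 0) ≤ 1 := by
      intro x
      rw [Finset.sum_boole]
      have : (A.filter fun t => f t = x).card ≤ 1 := Finset.card_le_one.mpr fun a ha b hb =>
        hf (((Finset.mem_filter.mp ha).2 : f a = x).trans (Finset.mem_filter.mp hb).2.symm)
      exact_mod_cast this
    have hrest := ih (f := fun t => swapV e (f t))
      (by rw [swapV_eq_swap]; exact (Equiv.swap e.1 e.2).injective.comp hf)
    simp only [moveSum, Finset.sum_add_distrib, List.length_cons, Nat.cast_succ] at hrest ⊢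
    linarith [hat_most_one e.1, hat_most_one e.2]

end Swaps

section Contrary

variable {m n : ℕ}

lemma cCount_eq_moveSum (t : Tok m n) (l : List (Vtx m × Vtx m)) (f : Tok m n → Vtx m) :
    (cCount t l f : ℤ) = moveSum t (fun u v => if isContrary t u v then 1 else 0) l f := by
  induction l generalizing f with
  | nil => rfl
  | cons e l ih =>
    simp only [cCount, moveSum, ← ih, ite_and]
    push_cast
    split_ifs <;> simp

lemma cCount_append (t : Tok m n) (l₁ l₂ : List (Vtx m × Vtx m)) (f : Tok m n → Vtx m) :
    cCount t (l₁ ++ l₂) f = cCount t l₁ f + cCount t l₂ (applySwaps l₁ f) := by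
  induction l₁ generalizing f with
  | nil => simp [cCount, applySwaps]
  | cons e l ih => simp only [List.cons_append, cCount, ih, applySwaps_cons]; ring

lemma placeAt_eq_applySwaps_window (σ : List (Vtx m × Vtx m)) (f : Tok m n → Vtx m)
    {a b : ℕ} (hab : a ≤ b) :
    placeAt σ f b = applySwaps ((σ.take b).drop a) (placeAt σ f a) := by
  rw [placeAt, placeAt, ← applySwaps_append]
  conv_lhs => rw [← List.take_append_drop a (σ.take b), List.take_take, min_eq_left hab]

lemma cCount_window_le (t : Tok m n) (σ : List (Vtx m × Vtx m)) (f : Tok m n → Vtx m)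
    {a b : ℕ} (hab : a ≤ b) :
    cCount t ((σ.take b).drop a) (placeAt σ f a) ≤ cCount t σ f := by
  conv_rhs => rw [← List.take_append_drop b σ, ← List.take_append_drop a (σ.take b),
    List.take_take, min_eq_left hab]
  rw [cCount_append, cCount_append, placeAt]
  omega

lemma sub_le_cCount {G : SimpleGraph (Vtx m)} {σ : List (Vtx m × Vtx m)}
    (hedges : ∀ e ∈ σ, G.Adj e.1 e.2) (t : Tok m n) (ψ : Vtx m → ℤ)
    (hψ : ∀ u v, G.Adj u v → ψ v - ψ u ≤ if isContrary t u v then 1 else 0)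
    (f : Tok m n → Vtx m) {a b : ℕ} (hab : a ≤ b) :
    ψ (placeAt σ f b t) - ψ (placeAt σ f a t) ≤ cCount t σ f := by
  have hwindow : ∀ e ∈ (σ.take b).drop a, G.Adj e.1 e.2 :=
    fun e he => hedges e (List.take_subset b σ (List.drop_subset _ _ he))
  rw [placeAt_eq_applySwaps_window σ f hab]
  calc _ ≤ moveSum t (fun u v => if isContrary t u v then 1 else 0) ((σ.take b).drop a)
        (placeAt σ f a) := sub_le_moveSum hwindow ψ hψ _ t
    _ = cCount t ((σ.take b).drop a) (placeAt σ f a) := (cCount_eq_moveSum ..).symm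
    _ ≤ cCount t σ f := by exact_mod_cast cCount_window_le t σ f hab

end Contrary

section Tree

variable {m n : ℕ} {s : Fin n → Fin m}

/-- Signed distance from the root; left moves are exactly the moves that decrease it. -/
def height (κ : ℕ) : Vtx m → ℤ
  | .root => 0
  | .ord d => -((d : ℤ) + 1)
  | .slot _ d => (d : ℤ) + 1
  | .nook _ => (κ : ℤ) + 1

lemma theGraph_adj {u v : Vtx m} :
    (TheGraph s).Adj u v ↔ u ≠ v ∧ (rel (lenSlot s) (lenOrd m n) (kk m n) u v ∨
      rel (lenSlot s) (lenOrd m n) (kk m n) v u) := by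
  rw [TheGraph, Tree, SimpleGraph.fromRel_adj]

lemma height_sub_of_adj {u v : Vtx m} (h : (TheGraph s).Adj u v) :
    height (kk m n) v - height (kk m n) u = if isLeftMove u v then -1 else 1 := by
  rw [theGraph_adj] at h
  rcases u with _ | d | ⟨i, d⟩ | i <;> rcases v with _ | d' | ⟨i', d'⟩ | i' <;>
    simp only [rel, isLeftMove, height] at h ⊢ <;> grind

lemma eq_root_of_adj_of_memGadget {u v : Vtx m} {g : Option (Fin m)}
    (h : (TheGraph s).Adj u v) (hu : memGadget u g) (hv : ¬ memGadget v g) : v = .root := by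
  rw [theGraph_adj] at h
  rcases u with _ | d | ⟨i, d⟩ | i <;> rcases v with _ | d' | ⟨i', d'⟩ | i' <;>
    rcases g with _ | j <;> simp only [rel, memGadget] at h hu hv ⊢ <;> grind

lemma height_pos_or_neg_on_gadget (κ : ℕ) (g : Option (Fin m)) :
    (∀ v, memGadget v g → 0 < height κ v) ∨ (∀ v, memGadget v g → height κ v < 0) := by
  rcases g with _ | j
  · refine .inr fun v hv => ?_
    rcases v with _ | d | ⟨i, d⟩ | i <;> simp only [memGadget, height] at hv ⊢
    omega
  · refine .inl fun v hv => ?_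
    rcases v with _ | d | ⟨i, d⟩ | i <;> simp only [memGadget, height] at hv ⊢ <;> omega

lemma one_le_abs_height (κ : ℕ) {g : Option (Fin m)} {v : Vtx m} (hv : memGadget v g) :
    1 ≤ |height κ v| := by
  rcases height_pos_or_neg_on_gadget κ g with hg | hg
  · rw [abs_of_pos (hg v hv)]
    exact hg v hv
  · rw [abs_of_neg (hg v hv)]
    linarith [hg v hv]

/-- Within a gadget, the distance from the root determines a vertex, except that the nook
lies as far from the root as the path vertex beyond its attachment point. -/
lemma eq_of_abs_height_eq (κ : ℕ) {g : Option (Fin m)} {u v : Vtx m}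
    (hu : memGadget u g) (hv : memGadget v g) (hu' : ∀ i, u ≠ .nook i)
    (hv' : ∀ i, v ≠ .nook i)
    (h : |height κ u| = |height κ v|) : u = v := by
  replace h : height κ u = height κ v := by
    rcases height_pos_or_neg_on_gadget κ g with hg | hg
    · rwa [abs_of_pos (hg u hu), abs_of_pos (hg v hv)] at h
    · rwa [abs_of_neg (hg u hu), abs_of_neg (hg v hv), neg_inj] at h
  rcases u with _ | d | ⟨i, d⟩ | i <;> rcases v with _ | d' | ⟨i', d'⟩ | i' <;>
    rcases g with _ | j <;> simp only [memGadget, height] at h hu hv hu' hv' ⊢ <;> grind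

lemma lt_lenOrd_of_adj {d : ℕ} {w : Vtx m} (h : (TheGraph s).Adj (.ord d) w) :
    d < lenOrd m n := by
  rw [theGraph_adj] at h
  rcases w with _ | d' | ⟨i', d'⟩ | i' <;> simp only [rel] at h <;> grind

lemma lt_lenSlot_of_adj {i : Fin m} {d : ℕ} {w : Vtx m} (h : (TheGraph s).Adj (.slot i d) w) :
    d < lenSlot s i := by
  rw [theGraph_adj] at h
  rcases w with _ | d' | ⟨i', d'⟩ | i' <;> simp only [rel] at h <;> grind

lemma exists_walk_ord_root {d : ℕ} (hd : d < lenOrd m n) :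
    ∃ p : (TheGraph s).Walk (.ord d) .root, p.length = d + 1 := by
  induction d with
  | zero =>
    have hadj : (TheGraph s).Adj (.ord 0) .root := by rw [theGraph_adj]; simp [rel, hd]
    exact ⟨hadj.toWalk, rfl⟩
  | succ d ih =>
    obtain ⟨p, hp⟩ := ih (by omega)
    have hadj : (TheGraph s).Adj (.ord (d + 1)) (.ord d) := by
      rw [theGraph_adj]; simp [rel, hd]
    exact ⟨.cons hadj p, by simp [hp]⟩

lemma exists_walk_slot_root {i : Fin m} {d : ℕ} (hd : d < lenSlot s i) :
    ∃ p : (TheGraph s).Walk (.slot i d) .root, p.length = d + 1 := by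
  induction d with
  | zero =>
    have hadj : (TheGraph s).Adj (.slot i 0) .root := by rw [theGraph_adj]; simp [rel, hd]
    exact ⟨hadj.toWalk, rfl⟩
  | succ d ih =>
    obtain ⟨p, hp⟩ := ih (by omega)
    have hadj : (TheGraph s).Adj (.slot i (d + 1)) (.slot i d) := by
      rw [theGraph_adj]; simp [rel, hd]
    exact ⟨.cons hadj p, by simp [hp]⟩

lemma exists_walk_root_of_adj {v w : Vtx m} (h : (TheGraph s).Adj v w) :
    ∃ p : (TheGraph s).Walk v .root, (p.length : ℤ) = |height (kk m n) v| := by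
  rcases v with _ | d | ⟨i, d⟩ | i
  · exact ⟨.nil, by simp [height]⟩
  · obtain ⟨p, hp⟩ := exists_walk_ord_root (lt_lenOrd_of_adj h)
    refine ⟨p, ?_⟩
    rw [hp, height, abs_neg, abs_of_nonneg (by positivity)]
    push_cast; ring
  · obtain ⟨p, hp⟩ := exists_walk_slot_root (lt_lenSlot_of_adj h)
    refine ⟨p, ?_⟩
    rw [hp, height, abs_of_nonneg (by positivity)]
    push_cast; ring
  · obtain ⟨d, hd, hlen⟩ : ∃ d, d + 1 = kk m n ∧ d < lenSlot s i := by
      rw [theGraph_adj] at h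
      rcases w with _ | d' | ⟨i', d'⟩ | i' <;>
        simp only [rel, false_or, or_false, and_false] at h
      obtain ⟨-, rfl, hd, hlen⟩ := h
      exact ⟨d', hd, hlen⟩
    have hadj : (TheGraph s).Adj (.nook i) (.slot i d) := by
      rw [theGraph_adj]; simp [rel, hd, hlen]
    obtain ⟨p, hp⟩ := exists_walk_slot_root hlen
    refine ⟨.cons hadj p, ?_⟩
    rw [SimpleGraph.Walk.length_cons, hp, height, abs_of_nonneg (by positivity), ← hd]
    push_cast; ring

lemma dist_le_abs_height_add_abs_height {u v : Vtx m} (h : (TheGraph s).Reachable u v) :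
    ((TheGraph s).dist u v : ℤ) ≤ |height (kk m n) u| + |height (kk m n) v| := by
  by_cases huv : u = v
  · subst huv
    simp
  obtain ⟨q⟩ := h
  have hadj : ∀ {a b : Vtx m}, a ≠ b → (TheGraph s).Walk a b → ∃ c, (TheGraph s).Adj a c
    | _, _, hab, .nil => absurd rfl hab
    | _, _, _, .cons hac _ => ⟨_, hac⟩
  obtain ⟨_, hu⟩ := hadj huv q
  obtain ⟨_, hv⟩ := hadj (Ne.symm huv) q.reverse
  obtain ⟨p₁, hp₁⟩ := exists_walk_root_of_adj hu
  obtain ⟨p₂, hp₂⟩ := exists_walk_root_of_adj hv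
  have := SimpleGraph.dist_le (p₁.append p₂.reverse)
  rw [SimpleGraph.Walk.length_append, SimpleGraph.Walk.length_reverse] at this
  omega

end Tree

section Potential

variable {m n : ℕ} {s : Fin n → Fin m}

/-- The contrary moves of `t` are exactly the moves that increase `orient t * height`. -/
def orient : Tok m n → ℤ
  | Sum.inr (Sum.inl _) => -1
  | Sum.inr (Sum.inr (Sum.inr (Sum.inl _))) => -1
  | _ => 1

lemma abs_orient (t : Tok m n) : |orient t| = 1 := by
  rcases t with o | x | x | x | x <;> simp [orient]

lemma orient_mul_height_sub_of_adj (t : Tok m n) {u v : Vtx m} (h : (TheGraph s).Adj u v) :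
    orient t * (height (kk m n) v - height (kk m n) u) = if isContrary t u v then 1 else -1 := by
  rw [height_sub_of_adj h]
  rcases t with o | x | x | x | x <;> cases hL : isLeftMove u v <;> simp [orient, isContrary, hL]

open Classical in
noncomputable def gadgetPot (κ : ℕ) (g : Option (Fin m)) (t : Tok m n) (v : Vtx m) : ℤ :=
  if memGadget v g then orient t * height κ v else 0

/-- Edges leave a gadget only through the root, where the height vanishes. -/
lemma gadgetPot_sub_le_of_adj (g : Option (Fin m)) (t : Tok m n) {u v : Vtx m}
    (h : (TheGraph s).Adj u v) :
    gadgetPot (kk m n) g t v - gadgetPot (kk m n) g t u ≤ if isContrary t u v then 1 else 0 := by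
  have hle : orient t * (height (kk m n) v - height (kk m n) u) ≤
      if isContrary t u v then 1 else 0 := by
    rw [orient_mul_height_sub_of_adj t h]; split_ifs <;> norm_num
  have hnonneg : (0 : ℤ) ≤ if isContrary t u v then 1 else 0 := by split_ifs <;> norm_num
  unfold gadgetPot
  by_cases hu : memGadget u g <;> by_cases hv : memGadget v g <;>
    simp only [hu, hv, if_true, if_false]
  · linarith
  · have hroot : height (kk m n) v = 0 := by rw [eq_root_of_adj_of_memGadget h hu hv]; rfl
    rw [hroot] at hle
    linarith
  · have hroot : height (kk m n) u = 0 := by rw [eq_root_of_adj_of_memGadget h.symm hv hu]; rfl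
    rw [hroot] at hle
    linarith
  · linarith

lemma gadgetPot_sub_le_cCount {σ : List (Vtx m × Vtx m)}
    (hedges : ∀ e ∈ σ, (TheGraph s).Adj e.1 e.2) (g : Option (Fin m)) (t : Tok m n)
    (f : Tok m n → Vtx m) {a b : ℕ} (hab : a ≤ b) :
    gadgetPot (kk m n) g t (placeAt σ f b t) - gadgetPot (kk m n) g t (placeAt σ f a t) ≤
      cCount t σ f :=
  sub_le_cCount hedges t _ (fun _ _ => gadgetPot_sub_le_of_adj g t) f hab

lemma gadgetPot_of_not_memGadget (κ : ℕ) {g : Option (Fin m)} (t : Tok m n) {v : Vtx m}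
    (hv : ¬ memGadget v g) : gadgetPot κ g t v = 0 := by
  simp [gadgetPot, hv]

lemma abs_gadgetPot_of_memGadget (κ : ℕ) {g : Option (Fin m)} (t : Tok m n) {v : Vtx m}
    (hv : memGadget v g) : |gadgetPot κ g t v| = |height κ v| := by
  simp [gadgetPot, hv, abs_mul, abs_orient]

/-- Getting from outside `g` to this vertex and back out again takes at least `|height|`
moves each way, and the moves in one of the two directions are contrary. -/
lemma abs_height_le_cCount_of_outside_before_after {σ : List (Vtx m × Vtx m)}
    (hedges : ∀ e ∈ σ, (TheGraph s).Adj e.1 e.2) {g : Option (Fin m)} {t : Tok m n}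
    {f : Tok m n → Vtx m} {τ₁ τ τ₂ : ℕ} (h₁ : τ₁ ≤ τ) (h₂ : τ ≤ τ₂)
    (hin : memGadget (placeAt σ f τ t) g) (hout₁ : ¬ memGadget (placeAt σ f τ₁ t) g)
    (hout₂ : ¬ memGadget (placeAt σ f τ₂ t) g) :
    |height (kk m n) (placeAt σ f τ t)| ≤ cCount t σ f := by
  have hin' := gadgetPot_sub_le_cCount hedges g t f h₁
  have hout' := gadgetPot_sub_le_cCount hedges g t f h₂
  rw [gadgetPot_of_not_memGadget _ _ hout₁] at hin'
  rw [gadgetPot_of_not_memGadget _ _ hout₂] at hout'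
  rw [← abs_gadgetPot_of_memGadget _ t hin, abs_le]
  constructor <;> linarith

lemma gadgetPot_le_cCount_of_passes_root {σ : List (Vtx m × Vtx m)}
    (hedges : ∀ e ∈ σ, (TheGraph s).Adj e.1 e.2) (g : Option (Fin m)) {t : Tok m n}
    {f : Tok m n → Vtx m} {τ₁ τ' τ₂ : ℕ} (h₁ : τ₁ ≤ τ') (h₂ : τ' ≤ τ₂)
    (hroot : placeAt σ f τ' t = .root) :
    gadgetPot (kk m n) g t (placeAt σ f τ₂ t) ≤ cCount t σ f ∧
      -gadgetPot (kk m n) g t (placeAt σ f τ₁ t) ≤ cCount t σ f := by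
  have hbefore := gadgetPot_sub_le_cCount hedges g t f h₁
  have hafter := gadgetPot_sub_le_cCount hedges g t f h₂
  have hzero : gadgetPot (kk m n) g t (placeAt σ f τ' t) = 0 := by
    rw [hroot]; simp [gadgetPot, height]
  constructor <;> linarith

/-- Whether entering `g` or leaving it is contrary depends only on the orientation, so one
of the two times serves all tokens of `S` at once. -/
lemma exists_abs_height_le_cCount_of_passes_root {σ : List (Vtx m × Vtx m)}
    (hedges : ∀ e ∈ σ, (TheGraph s).Adj e.1 e.2) {g : Option (Fin m)} {S : Finset (Tok m n)}
    {ε : ℤ} (horient : ∀ t ∈ S, orient t = ε) {f : Tok m n → Vtx m} {τ₁ τ₂ : ℕ}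
    (hin : ∀ t ∈ S, memGadget (placeAt σ f τ₁ t) g ∧ memGadget (placeAt σ f τ₂ t) g)
    (hroot : ∀ t ∈ S, ∃ τ', τ₁ ≤ τ' ∧ τ' ≤ τ₂ ∧ placeAt σ f τ' t = .root) :
    ∃ τ, (∀ t ∈ S, memGadget (placeAt σ f τ t) g) ∧
      ∀ t ∈ S, |height (kk m n) (placeAt σ f τ t)| ≤ cCount t σ f := by
  have hpot : ∀ t ∈ S, ∀ v, memGadget v g →
      gadgetPot (kk m n) g t v = ε * height (kk m n) v :=
    fun t ht v hv => by simp [gadgetPot, hv, horient t ht]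
  have hbound : ∀ t ∈ S, gadgetPot (kk m n) g t (placeAt σ f τ₂ t) ≤ cCount t σ f ∧
      -gadgetPot (kk m n) g t (placeAt σ f τ₁ t) ≤ cCount t σ f := fun t ht => by
    obtain ⟨τ', h₁, h₂, hτ'⟩ := hroot t ht
    exact gadgetPot_le_cCount_of_passes_root hedges g h₁ h₂ hτ'
  have hsign : (∀ v, memGadget v g → 0 ≤ ε * height (kk m n) v) ∨
      (∀ v, memGadget v g → ε * height (kk m n) v ≤ 0) := by
    rcases le_total 0 ε with hε | hε <;>
      rcases height_pos_or_neg_on_gadget (kk m n) g with hg | hg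
    · exact .inl fun v hv => by nlinarith [hg v hv]
    · exact .inr fun v hv => by nlinarith [hg v hv]
    · exact .inr fun v hv => by nlinarith [hg v hv]
    · exact .inl fun v hv => by nlinarith [hg v hv]
  rcases hsign with hsign | hsign
  · refine ⟨τ₂, fun t ht => (hin t ht).2, fun t ht => ?_⟩
    have hmem := (hin t ht).2
    rw [← abs_gadgetPot_of_memGadget _ t hmem, abs_of_nonneg (hpot t ht _ hmem ▸ hsign _ hmem)]
    exact (hbound t ht).1
  · refine ⟨τ₁, fun t ht => (hin t ht).1, fun t ht => ?_⟩
    have hmem := (hin t ht).1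
    rw [← abs_gadgetPot_of_memGadget _ t hmem, abs_of_nonpos (hpot t ht _ hmem ▸ hsign _ hmem)]
    exact (hbound t ht).2

end Potential

section Counting

lemma card_mul_card_add_one_le_two_mul_sum {A : Finset ℤ} (hA : ∀ x ∈ A, 1 ≤ x) :
    (A.card : ℤ) * (A.card + 1) ≤ 2 * ∑ x ∈ A, x := by
  have hgauss : ∀ r : ℕ, 2 * ∑ i ∈ Finset.range r, (1 + (i : ℤ)) = r * (r + 1) := by
    intro r
    induction r with
    | zero => simp
    | succ r ih => rw [Finset.sum_range_succ, mul_add, ih]; push_cast; ring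
  rw [← hgauss]
  linarith [Finset.sum_range_le_sum hA]

variable {m : ℕ}

lemma card_mul_card_add_one_le_two_mul_sum_abs_height (κ : ℕ) {g : Option (Fin m)}
    {W : Finset (Vtx m)} (hW : ∀ v ∈ W, memGadget v g) (hnook : ∀ i, .nook i ∉ W) :
    (W.card : ℤ) * (W.card + 1) ≤ 2 * ∑ v ∈ W, |height κ v| := by
  have hinj : Set.InjOn (fun v => |height κ v|) W := fun u hu v hv h =>
    eq_of_abs_height_eq κ (hW u hu) (hW v hv) (fun i hi => hnook i (hi ▸ hu))
      (fun i hi => hnook i (hi ▸ hv)) h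
  have h := card_mul_card_add_one_le_two_mul_sum (A := W.image fun v => |height κ v|)
    (by simpa using fun v hv => one_le_abs_height κ (hW v hv))
  rwa [Finset.card_image_of_injOn hinj, Finset.sum_image hinj] at h

/-- The second alternative is the case that the nook is among the vertices. -/
lemma card_mul_le_two_mul_sum_abs_height (κ : ℕ) {g : Option (Fin m)} {V₀ : Finset (Vtx m)}
    (hV : ∀ v ∈ V₀, memGadget v g) :
    (V₀.card : ℤ) * (V₀.card + 1) ≤ 2 * ∑ v ∈ V₀, |height κ v| ∨
      (V₀.card : ℤ) * (V₀.card - 1) + 2 * (κ + 1) ≤ 2 * ∑ v ∈ V₀, |height κ v| := by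
  by_cases hnook : ∃ i, Vtx.nook i ∈ V₀
  · obtain ⟨i, hi⟩ := hnook
    have hfree : ∀ i', Vtx.nook i' ∉ V₀.erase (.nook i) := by
      intro i' hi'
      obtain ⟨hne, hi'⟩ := Finset.mem_erase.mp hi'
      have h₁ := hV _ hi
      have h₂ := hV _ hi'
      rcases g with _ | j <;> simp only [memGadget] at h₁ h₂
      exact hne (by rw [h₁, h₂])
    have hrest := card_mul_card_add_one_le_two_mul_sum_abs_height κ
      (fun v hv => hV v (Finset.mem_of_mem_erase hv)) hfree
    have hcard := Finset.card_erase_add_one hi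
    rw [← Finset.add_sum_erase _ _ hi]
    refine .inr ?_
    rw [← hcard, height, abs_of_nonneg (by positivity)]
    push_cast
    linarith
  · exact .inl (card_mul_card_add_one_le_two_mul_sum_abs_height κ hV (not_exists.mp hnook))

end Counting

section Injectivity

lemma eq_of_add_eq_of_windows {ι : Type*} [LinearOrder ι] {off L : ι → ℕ}
    (hwin : ∀ j j', j < j' → off j + L j ≤ off j') {j j' : ι} {r r' : ℕ}
    (hr : r < L j) (hr' : r' < L j') (h : off j + r = off j' + r') : j = j' ∧ r = r' := by
  rcases lt_trichotomy j j' with hlt | rfl | hlt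
  · have := hwin _ _ hlt
    omega
  · exact ⟨rfl, by omega⟩
  · have := hwin _ _ hlt
    omega

lemma eq_of_mul_add_eq_mul_add {B j j' r r' : ℕ} (hr : r < B) (hr' : r' < B)
    (h : j * B + r = j' * B + r') : j = j' ∧ r = r' :=
  eq_of_add_eq_of_windows (off := fun j => j * B) (L := fun _ => B)
    (fun _ _ hlt => by rw [← Nat.succ_mul]; exact Nat.mul_le_mul_right _ hlt) hr hr' h

lemma card_filter_lt_lt_card_filter_lt {m : ℕ} {P : Fin m → Prop} [DecidablePred P]
    {a b : Fin m} (hab : a < b) (ha : P a) :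
    (Finset.univ.filter fun x : Fin m => x.val < a.val ∧ P x).card <
      (Finset.univ.filter fun x : Fin m => x.val < b.val ∧ P x).card := by
  refine Finset.card_lt_card ⟨?_, fun hsub => ?_⟩
  · intro x hx
    simp only [Finset.mem_filter, Finset.mem_univ, true_and] at hx ⊢
    exact ⟨hx.1.trans hab, hx.2⟩
  · have := hsub (Finset.mem_filter.mpr ⟨Finset.mem_univ a, hab, ha⟩)
    exact lt_irrefl _ (Finset.mem_filter.mp this).2.1

variable {m n : ℕ} {s : Fin n → Fin m}

lemma offQ_add_le_offQ (i : Fin m) {j j' : Fin n} (h : j < j') :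
    offQ s i j + (kk' m n + if s j = i then kk m n else 0) ≤ offQ s i j' := by
  have hj : j ∉ Finset.univ.filter (fun j'' : Fin n => j''.val < j.val) := by simp
  calc offQ s i j + (kk' m n + if s j = i then kk m n else 0)
      = ∑ j'' ∈ insert j (Finset.univ.filter fun j'' : Fin n => j''.val < j.val),
          (kk' m n + if s j'' = i then kk m n else 0) := by
        rw [Finset.sum_insert hj, offQ, add_comm]
    _ ≤ offQ s i j' := Finset.sum_le_sum_of_subset fun x hx => by
        simp only [Finset.mem_insert, Finset.mem_filter, Finset.mem_univ, true_and] at hx ⊢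
        rcases hx with rfl | hx
        · exact h
        · exact hx.trans h

lemma nxt_ne_some_self (hcons : ∀ (j : Fin n) (h : j.val + 1 < n), s j ≠ s ⟨j.val + 1, h⟩)
    (j : Fin n) : nxt s j ≠ some (s j) := by
  unfold nxt
  split_ifs with h
  · exact fun he => hcons j h (Option.some_injective _ he).symm
  · simp

lemma rho_middle_le (hcons : ∀ (j : Fin n) (h : j.val + 1 < n), s j ≠ s ⟨j.val + 1, h⟩)
    {i : Fin m} {j : Fin n} (hnxt : some i ≠ nxt s j) (hlast : i ≠ s j) :
    (if (nxt s j).isSome then 1 else 0) +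
      (Finset.univ.filter fun i' : Fin m =>
        i'.val < i.val ∧ i' ≠ s j ∧ some i' ≠ nxt s j).card ≤ m - 2 := by
  set F := Finset.univ.filter fun i' : Fin m =>
    i'.val < i.val ∧ i' ≠ s j ∧ some i' ≠ nxt s j
  set R := (Finset.univ.erase i).erase (s j)
  have hR : R.card = m - 2 := by
    rw [Finset.card_erase_of_mem (Finset.mem_erase.mpr ⟨Ne.symm hlast, Finset.mem_univ _⟩),
      Finset.card_erase_of_mem (Finset.mem_univ _), Finset.card_univ, Fintype.card_fin]
    omega
  have hFR : F ⊆ R := fun x hx => by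
    simp only [F, R, Finset.mem_filter, Finset.mem_erase] at hx ⊢
    exact ⟨hx.2.2.1, fun h => (lt_irrefl _ (h ▸ hx.2.1)), Finset.mem_univ _⟩
  rw [← hR]
  rcases hx : nxt s j with _ | i₀
  · simpa using Finset.card_le_card hFR
  · have hi₀ : i₀ ∈ R \ F := by
      have := nxt_ne_some_self hcons j
      simp only [F, R, Finset.mem_sdiff, Finset.mem_filter, Finset.mem_erase, hx] at this ⊢
      refine ⟨⟨fun h => this (h ▸ rfl), fun h => hnxt (h ▸ hx.symm), Finset.mem_univ _⟩,
        ?_⟩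
      simp
    have := Finset.card_lt_card (Finset.ssubset_iff_subset_ne.mpr ⟨hFR, fun h => by
      rw [h] at hi₀; simp at hi₀⟩)
    simp only [Option.isSome_some, if_true]
    omega

lemma rho_cases (s : Fin n → Fin m) (i : Fin m) (j : Fin n) :
    (some i = nxt s j ∧ rho s i j = 0) ∨
      (some i ≠ nxt s j ∧ i = s j ∧ rho s i j = m - 1) ∨
      (some i ≠ nxt s j ∧ i ≠ s j ∧ rho s i j = (if (nxt s j).isSome then 1 else 0) +
        (Finset.univ.filter fun i' : Fin m =>
          i'.val < i.val ∧ i' ≠ s j ∧ some i' ≠ nxt s j).card) := by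
  unfold rho
  by_cases h₁ : some i = nxt s j
  · exact .inl ⟨h₁, if_pos h₁⟩
  by_cases h₂ : i = s j
  · exact .inr (.inl ⟨h₁, h₂, by rw [if_neg h₁, if_pos h₂]⟩)
  · exact .inr (.inr ⟨h₁, h₂, by rw [if_neg h₁, if_neg h₂]⟩)

lemma rho_lt (hcons : ∀ (j : Fin n) (h : j.val + 1 < n), s j ≠ s ⟨j.val + 1, h⟩)
    (i : Fin m) (j : Fin n) : rho s i j < m := by
  have hm := i.pos
  rcases rho_cases s i j with ⟨-, hr⟩ | ⟨-, -, hr⟩ | ⟨h₁, h₂, hr⟩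
  · omega
  · omega
  · have := rho_middle_le hcons h₁ h₂
    omega

lemma rho_injective (hm : 1 < m)
    (hcons : ∀ (j : Fin n) (h : j.val + 1 < n), s j ≠ s ⟨j.val + 1, h⟩) (j : Fin n) :
    Function.Injective fun i => rho s i j := by
  intro i i' h
  simp only at h
  have hsome : ∀ {i}, some i = nxt s j → (if (nxt s j).isSome then 1 else 0) = 1 :=
    fun h => by rw [← h]; rfl
  rcases rho_cases s i j with ⟨h₁, hr⟩ | ⟨h₁, h₂, hr⟩ | ⟨h₁, h₂, hr⟩ <;>
    rcases rho_cases s i' j with ⟨h₁', hr'⟩ | ⟨h₁', h₂', hr'⟩ | ⟨h₁', h₂', hr'⟩ <;>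
      rw [hr, hr'] at h
  · exact Option.some_injective _ (h₁.trans h₁'.symm)
  · omega
  · have := hsome h₁
    omega
  · omega
  · exact h₂.trans h₂'.symm
  · have := rho_middle_le hcons h₁' h₂'
    omega
  · have := hsome h₁'
    omega
  · have := rho_middle_le hcons h₁ h₂
    omega
  · rcases lt_trichotomy i i' with hlt | rfl | hlt
    · have := card_filter_lt_lt_card_filter_lt
        (P := fun x => x ≠ s j ∧ some x ≠ nxt s j) hlt ⟨h₂, h₁⟩
      omega
    · rfl
    · have := card_filter_lt_lt_card_filter_lt
        (P := fun x => x ≠ s j ∧ some x ≠ nxt s j) hlt ⟨h₂', h₁'⟩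
      omega

lemma rho_mul_add_lt (hcons : ∀ (j : Fin n) (h : j.val + 1 < n), s j ≠ s ⟨j.val + 1, h⟩)
    (i : Fin m) (j : Fin n) (a : Fin (kk' m n)) : rho s i j * kk' m n + a.val < m * kk' m n :=
  calc rho s i j * kk' m n + a.val < (rho s i j + 1) * kk' m n := by
        rw [Nat.succ_mul]; exact Nat.add_lt_add_left a.isLt _
    _ ≤ m * kk' m n := Nat.mul_le_mul_right _ (rho_lt hcons i j)

lemma eq_of_offQ_add_eq {i : Fin m} {j j' : Fin n} {r r' : ℕ}
    (hr : r < kk' m n + (if s j = i then kk m n else 0))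
    (hr' : r' < kk' m n + (if s j' = i then kk m n else 0))
    (h : offQ s i j + r = offQ s i j' + r') : j = j' ∧ r = r' :=
  eq_of_add_eq_of_windows (fun _ _ => offQ_add_le_offQ _) hr hr' h

lemma initTok_injective (hm : 1 < m)
    (hcons : ∀ (j : Fin n) (h : j.val + 1 < n), s j ≠ s ⟨j.val + 1, h⟩) :
    Function.Injective (initTok s) := by
  have hord : ∀ {j j' : Fin n} {r r' : ℕ}, r < kk m n + m * kk' m n →
      r' < kk m n + m * kk' m n →
      j.val * (kk m n + m * kk' m n) + r = j'.val * (kk m n + m * kk' m n) + r' →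
      j = j' ∧ r = r' := fun hr hr' h =>
    (eq_of_mul_add_eq_mul_add hr hr' h).imp Fin.ext id
  intro t t' h
  rcases t with (_ | i₀) | ⟨j, a⟩ | ⟨j, a⟩ | ⟨i, j, a⟩ | ⟨i, j, a⟩ <;>
    rcases t' with (_ | i₀') | ⟨j', a'⟩ | ⟨j', a'⟩ | ⟨i', j', a'⟩ | ⟨i', j', a'⟩ <;>
    simp only [initTok, Vtx.ord.injEq, Vtx.slot.injEq, Vtx.nook.injEq, reduceCtorEq] at h
  · rfl
  · rw [h]
  · obtain ⟨rfl, ha⟩ := hord (by omega) (by omega) h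
    rw [Fin.ext ha]
  · have := rho_mul_add_lt hcons i' j' a'
    obtain ⟨-, ha⟩ := hord (j := j) (j' := j') (r := a)
      (r' := kk m n + rho s i' j' * kk' m n + a') (by omega) (by omega) (by omega)
    omega
  · obtain ⟨hs, h⟩ := h
    rw [← hs] at h
    obtain ⟨rfl, ha⟩ := eq_of_offQ_add_eq (s := s) (by simp; omega) (by simp [hs]; omega) h
    rw [Fin.ext ha]
  · obtain ⟨rfl, h⟩ := h
    obtain ⟨rfl, ha⟩ := eq_of_offQ_add_eq (s := s) (i := s j) (j := j) (j' := j') (r := a)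
      (r' := (if s j' = s j then kk m n else 0) + a')
      (by simp; omega) (by omega) (by omega)
    simp at ha
    omega
  · have := rho_mul_add_lt hcons i j a
    obtain ⟨-, ha⟩ := hord (j := j) (j' := j') (r := kk m n + rho s i j * kk' m n + a)
      (r' := a') (by omega) (by omega) (by omega)
    omega
  · have := rho_mul_add_lt hcons i j a
    have := rho_mul_add_lt hcons i' j' a'
    obtain ⟨rfl, h⟩ := hord (j := j) (j' := j') (r := kk m n + rho s i j * kk' m n + a)
      (r' := kk m n + rho s i' j' * kk' m n + a') (by omega) (by omega) (by omega)
    obtain ⟨hρ, ha⟩ := eq_of_mul_add_eq_mul_add a.isLt a'.isLt (by omega :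
      rho s i j * kk' m n + a = rho s i' j * kk' m n + a')
    obtain rfl := rho_injective hm hcons j hρ
    rw [Fin.ext ha]
  · obtain ⟨rfl, h⟩ := h
    obtain ⟨rfl, ha⟩ := eq_of_offQ_add_eq (s := s) (i := s j') (j := j) (j' := j')
      (r := (if s j = s j' then kk m n else 0) + a) (r' := a') (by omega) (by simp; omega)
      (by omega)
    simp at ha
    omega
  · obtain ⟨rfl, h⟩ := h
    obtain ⟨rfl, ha⟩ := eq_of_offQ_add_eq (s := s) (i := i) (j := j) (j' := j')
      (r := (if s j = i then kk m n else 0) + a) (r' := (if s j' = i then kk m n else 0) + a')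
      (by omega) (by omega) (by omega)
    rw [Fin.ext (by omega : a.val = a'.val)]

end Injectivity

section GlobalBound

variable {m n : ℕ} {s : Fin n → Fin m}

lemma orient_mul_height_initTok_tgtTok (κ : ℕ) (π : Equiv.Perm (Option (Fin m)))
    (t : NonItem m n) :
    orient (Sum.inr t) * height κ (initTok s (Sum.inr t)) = |height κ (initTok s (Sum.inr t))| ∧
      orient (Sum.inr t) * height κ (tgtTok s π (Sum.inr t)) =
        -|height κ (tgtTok s π (Sum.inr t))| := by
  have habs : ∀ d : ℕ, |(d : ℤ) + 1| = d + 1 := fun d => abs_of_nonneg (by positivity)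
  rcases t with x | x | x | x <;>
    simp only [orient, initTok, tgtTok, height, abs_neg, habs, neg_mul, one_mul, neg_neg,
      and_self]

lemma two_mul_cCount_add_dd_le_moveSum (π : Equiv.Perm (Option (Fin m)))
    {σ : List (Vtx m × Vtx m)} (hedges : ∀ e ∈ σ, (TheGraph s).Adj e.1 e.2)
    (hsol : applySwaps σ (initTok s) = tgtTok s π) (t : NonItem m n) :
    2 * (cCount (Sum.inr t) σ (initTok s) : ℤ) + dd s π (Sum.inr t) ≤
      moveSum (Sum.inr t) (fun _ _ => 1) σ (initTok s) := by
  have hreach := reachable_applySwaps hedges (initTok s) (Sum.inr t)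
  rw [hsol] at hreach
  have hdist := dist_le_abs_height_add_abs_height hreach
  obtain ⟨hinit, htgt⟩ := orient_mul_height_initTok_tgtTok (s := s) (kk m n) π t
  have hpot := sub_le_moveSum hedges (fun v => -(orient (Sum.inr t) * height (kk m n) v))
    (w := fun u v => 1 + (-2) * if isContrary (Sum.inr t) u v then 1 else 0)
    (fun u v h => by
      have := orient_mul_height_sub_of_adj (Sum.inr t) h
      split_ifs at this ⊢ <;> linarith)
    (initTok s) (Sum.inr t)
  rw [moveSum_add_mul, hsol, ← cCount_eq_moveSum] at hpot
  unfold dd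
  linarith

lemma two_mul_sum_cCount_le (π : Equiv.Perm (Option (Fin m))) {σ : List (Vtx m × Vtx m)}
    (hinj : Function.Injective (initTok s))
    (hedges : ∀ e ∈ σ, (TheGraph s).Adj e.1 e.2)
    (hsol : applySwaps σ (initTok s) = tgtTok s π)
    (hlen : 2 * σ.length ≤ (∑ t : NonItem m n, (dd s π (Sum.inr t) + 1)) + 2 * n) :
    2 * ∑ t : NonItem m n, cCount (Sum.inr t) σ (initTok s) ≤
      Fintype.card (NonItem m n) + 2 * n := by
  have hmoves := sum_moveSum_one_le (Finset.univ.map .inr) σ hinj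
  simp only [Finset.sum_map, Function.Embedding.inr_apply] at hmoves
  have hsum := Finset.sum_le_sum fun t (_ : t ∈ Finset.univ) =>
    two_mul_cCount_add_dd_le_moveSum π hedges hsol t
  rw [Finset.sum_add_distrib, ← Finset.mul_sum] at hsum
  rw [Finset.sum_add_distrib, Finset.sum_const, Finset.card_univ, smul_eq_mul, mul_one] at hlen
  have hlen' : (2 * σ.length : ℤ) ≤ ∑ t : NonItem m n, (dd s π (Sum.inr t) : ℤ) +
      Fintype.card (NonItem m n) + 2 * n := by exact_mod_cast hlen
  have : (2 * ∑ t : NonItem m n, cCount (Sum.inr t) σ (initTok s) : ℤ) ≤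
      Fintype.card (NonItem m n) + 2 * n := by push_cast; linarith
  exact_mod_cast this

lemma card_nonItem_add_le (hm : 1 < m) (hn : 1 < n) :
    Fintype.card (NonItem m n) + 2 * n ≤ (m * n) ^ 27 := by
  have hk : 1 ≤ kk m n := Nat.one_le_pow _ _ (by positivity)
  have hk' : kk' m n ≤ kk m n := Nat.div_le_self _ _
  have hmn : 2 * 2 ≤ m * n := Nat.mul_le_mul hm hn
  simp only [NonItem, Fintype.card_sum, Fintype.card_prod, Fintype.card_fin]
  calc n * kk m n + (n * kk m n + (m * (n * kk' m n) + m * (n * kk' m n))) + 2 * n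
      ≤ (4 * n + 2 * (m * n)) * kk m n := by nlinarith
    _ ≤ (m * n) ^ 2 * kk m n := by gcongr; nlinarith
    _ = (m * n) ^ 27 := by rw [kk, ← pow_add]

end GlobalBound

section Escape

variable {m n : ℕ}

lemma subset_map_inr_of_slot_or_nonSlot {S : Finset (Tok m n)}
    (htype : (∀ t ∈ S, isSlotTok t) ∨ (∀ t ∈ S, isNonSlotTok t)) :
    S ⊆ Finset.univ.map .inr := by
  intro t ht
  rcases htype with h | h <;> have := h t ht <;>
    rcases t with o | x | x | x | x <;> simp_all [isSlotTok, isNonSlotTok]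

lemma exists_orient_eq_of_slot_or_nonSlot {S : Finset (Tok m n)}
    (htype : (∀ t ∈ S, isSlotTok t) ∨ (∀ t ∈ S, isNonSlotTok t)) :
    ∃ ε, ∀ t ∈ S, orient t = ε := by
  rcases htype with h | h
  · refine ⟨1, fun t ht => ?_⟩
    have := h t ht
    rcases t with o | x | x | x | x <;> simp_all [orient, isSlotTok]
  · refine ⟨-1, fun t ht => ?_⟩
    have := h t ht
    rcases t with o | x | x | x | x <;> simp_all [orient, isNonSlotTok]

/-- With `X` the number of contrary moves and `r` the number of tokens: a nook can spoil the
triangular lower bound only when `r > 2κ + 2`, which the global bound `2X ≤ κ²` excludes. -/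
lemma sq_le_two_mul_of_lower_bound {r X κ : ℤ} (hr : 0 ≤ r) (hκ : 0 ≤ κ)
    (hX : 2 * X ≤ κ * κ)
    (h : r * (r + 1) ≤ 2 * X ∨ r * (r - 1) + 2 * (κ + 1) ≤ 2 * X) : r ^ 2 ≤ 2 * X := by
  rcases h with h | h
  · nlinarith
  · by_contra hlt
    have hbig : 2 * κ + 3 ≤ r := by nlinarith
    nlinarith [mul_le_mul hbig (by linarith : 2 * κ + 2 ≤ r - 1) (by linarith) hr]

lemma sq_card_le_two_mul_sum_of_abs_height_le {α : Type*} {S : Finset α} {pos : α → Vtx m}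
    {g : Option (Fin m)} {κ : ℕ} {c : α → ℕ} (hpos : Set.InjOn pos S)
    (hin : ∀ t ∈ S, memGadget (pos t) g) (hdepth : ∀ t ∈ S, |height κ (pos t)| ≤ c t)
    (hglobal : 2 * ∑ t ∈ S, c t ≤ κ * κ) :
    S.card ^ 2 ≤ 2 * ∑ t ∈ S, c t := by
  have hsum : ∑ v ∈ S.image pos, |height κ v| ≤ ∑ t ∈ S, (c t : ℤ) := by
    rw [Finset.sum_image hpos]
    exact Finset.sum_le_sum hdepth
  have hlower := card_mul_le_two_mul_sum_abs_height κ (V₀ := S.image pos)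
    (Finset.forall_mem_image.mpr hin)
  rw [Finset.card_image_of_injOn hpos] at hlower
  have := sq_le_two_mul_of_lower_bound (X := ∑ t ∈ S, (c t : ℤ)) (Nat.cast_nonneg _)
    (Nat.cast_nonneg κ) (by exact_mod_cast hglobal)
    (hlower.imp (fun h => h.trans (by linarith)) (fun h => h.trans (by linarith)))
  exact_mod_cast this

end Escape

theorem gadget_escape_contrary_moves_general {m n : ℕ} (hm : 1 < m) (hn : 1 < n)
    (s : Fin n → Fin m) (π : Equiv.Perm (Option (Fin m)))
    (hcons : ∀ (j : Fin n) (h : j.val + 1 < n), s j ≠ s ⟨j.val + 1, h⟩)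
    (σ : List (Vtx m × Vtx m))
    (hedges : ∀ e ∈ σ, (TheGraph s).Adj e.1 e.2)
    (hsol : applySwaps σ (initTok s) = tgtTok s π)
    (hlen : 2 * σ.length ≤ (∑ t : NonItem m n, (dd s π (Sum.inr t) + 1)) + 2 * n)
    (S : Finset (Tok m n)) (g : Option (Fin m))
    (htype : (∀ t ∈ S, isSlotTok t) ∨ (∀ t ∈ S, isNonSlotTok t))
    (hcase :
      (∃ τ ≤ σ.length, (∀ t ∈ S, memGadget (placeAt σ (initTok s) τ t) g) ∧
        ∀ t ∈ S,
          (∃ τ₁, τ₁ < τ ∧ ¬ memGadget (placeAt σ (initTok s) τ₁ t) g) ∧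
          (∃ τ₂, τ < τ₂ ∧ τ₂ ≤ σ.length ∧ ¬ memGadget (placeAt σ (initTok s) τ₂ t) g)) ∨
      (∃ τ₁ τ₂, τ₁ < τ₂ ∧ τ₂ ≤ σ.length ∧
        (∀ t ∈ S, memGadget (placeAt σ (initTok s) τ₁ t) g ∧
          memGadget (placeAt σ (initTok s) τ₂ t) g) ∧
        ∀ t ∈ S, ∃ τ', τ₁ ≤ τ' ∧ τ' ≤ τ₂ ∧ placeAt σ (initTok s) τ' t = Vtx.root)) :
    S.card ^ 2 ≤ 2 * ∑ t ∈ S, cCount t σ (initTok s) ∧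
      S.card ^ 2 ≤ (m * n) ^ 27 := by
  have hinj := initTok_injective hm hcons
  have hglobal : 2 * ∑ t ∈ S, cCount t σ (initTok s) ≤ (m * n) ^ 27 :=
    calc 2 * ∑ t ∈ S, cCount t σ (initTok s)
        ≤ 2 * ∑ t : NonItem m n, cCount (Sum.inr t) σ (initTok s) :=
          Nat.mul_le_mul_left _ ((Finset.sum_le_sum_of_subset
            (subset_map_inr_of_slot_or_nonSlot htype)).trans_eq (Finset.sum_map _ _ _))
      _ ≤ Fintype.card (NonItem m n) + 2 * n := two_mul_sum_cCount_le π hinj hedges hsol hlen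
      _ ≤ (m * n) ^ 27 := card_nonItem_add_le hm hn
  obtain ⟨τ, hin, hdepth⟩ : ∃ τ, (∀ t ∈ S, memGadget (placeAt σ (initTok s) τ t) g) ∧
      ∀ t ∈ S, |height (kk m n) (placeAt σ (initTok s) τ t)| ≤ cCount t σ (initTok s) := by
    rcases hcase with ⟨τ, -, hin, hout⟩ | ⟨τ₁, τ₂, -, -, hin, hroot⟩
    · refine ⟨τ, hin, fun t ht => ?_⟩
      obtain ⟨⟨τ₁, h₁, hout₁⟩, τ₂, h₂, -, hout₂⟩ := hout t ht
      exact abs_height_le_cCount_of_outside_before_after hedges h₁.le h₂.le (hin t ht) hout₁ hout₂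
    · obtain ⟨ε, horient⟩ := exists_orient_eq_of_slot_or_nonSlot htype
      exact exists_abs_height_le_cCount_of_passes_root hedges horient hin hroot
  have hκ : (m * n) ^ 27 ≤ kk m n * kk m n := by
    rw [kk, ← pow_add]
    exact Nat.pow_le_pow_right (by nlinarith) (by norm_num)
  have hfirst := sq_card_le_two_mul_sum_of_abs_height_le (applySwaps_injective _ hinj).injOn
    hin hdepth (hglobal.trans hκ)
  exact ⟨hfirst, hfirst.trans hglobal⟩

theorem gadget_escape_contrary_moves {m n : ℕ} (hm : 1 < m) (hn : 1 < n)
    (s : Fin n → Fin m) (π : Equiv.Perm (Option (Fin m)))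
    (hπ0 : π none = none)
    (hocc : ∀ i : Fin m, ∃ j, s j = i)
    (hcons : ∀ (j : Fin n) (h : j.val + 1 < n), s j ≠ s ⟨j.val + 1, h⟩)
    (σ : List (Vtx m × Vtx m))
    (hedges : ∀ e ∈ σ, (TheGraph s).Adj e.1 e.2)
    (hsol : applySwaps σ (initTok s) = tgtTok s π)
    (hlen : 2 * σ.length ≤ (∑ t : NonItem m n, (dd s π (Sum.inr t) + 1)) + 2 * n)
    (S : Finset (Tok m n)) (g : Option (Fin m))
    (htype : (∀ t ∈ S, isSlotTok t) ∨ (∀ t ∈ S, isNonSlotTok t))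
    (hcase :
      (∃ τ ≤ σ.length, (∀ t ∈ S, memGadget (placeAt σ (initTok s) τ t) g) ∧
        ∀ t ∈ S,
          (∃ τ₁, τ₁ < τ ∧ ¬ memGadget (placeAt σ (initTok s) τ₁ t) g) ∧
          (∃ τ₂, τ < τ₂ ∧ τ₂ ≤ σ.length ∧ ¬ memGadget (placeAt σ (initTok s) τ₂ t) g)) ∨
      (∃ τ₁ τ₂, τ₁ < τ₂ ∧ τ₂ ≤ σ.length ∧
        (∀ t ∈ S, memGadget (placeAt σ (initTok s) τ₁ t) g ∧
          memGadget (placeAt σ (initTok s) τ₂ t) g) ∧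
        ∀ t ∈ S, ∃ τ', τ₁ ≤ τ' ∧ τ' ≤ τ₂ ∧ placeAt σ (initTok s) τ' t = Vtx.root)) :
    S.card ^ 2 ≤ 2 * ∑ t ∈ S, cCount t σ (initTok s) ∧
      S.card ^ 2 ≤ (m * n) ^ 27 :=
  gadget_escape_contrary_moves_general hm hn s π hcons σ hedges hsol hlen S g htype hcase

end UnweightedTS
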